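/- Let t ≥ 1, ℓ ≥ 3 and let H be a disjoint union of paths with longest path of order exactly (t-1)(ℓ-1) + ℓ - 2. If K_1 ∨ H contains no B_{tℓ}, then the second longest path of H has order at most ℓ - 2. -/

import Mathlib

open SimpleGraph Matrix

/-- `H` is a minor of `G`: branch sets are connected, pairwise disjoint, and
edges of `H` are represented by edges between branch sets. -/
def MinorOf {α : Type*} {β : Type*} (H : SimpleGraph α) (G : SimpleGraph β) : Prop :=
  ∃ f : α → Set β,
    (∀ a, (G.induce (f a)).Connected) ∧
    (Pairwise fun a b => Disjoint (f a) (f b)) ∧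
    ∀ a b, H.Adj a b → ∃ u ∈ f a, ∃ v ∈ f b, G.Adj u v

/-- A graph is outerplanar iff it has no `K₄`-minor and no `K_{2,3}`-minor. -/
def Outerplanar {β : Type*} (G : SimpleGraph β) : Prop :=
  ¬ MinorOf (completeGraph (Fin 4)) G ∧ ¬ MinorOf (completeBipartiteGraph (Fin 2) (Fin 3)) G

/-- The join `G ∨ H` of two graphs. -/
def graphJoin {α β : Type*} (G : SimpleGraph α) (H : SimpleGraph β) : SimpleGraph (α ⊕ β) where
  Adj x y :=
    match x, y with
    | Sum.inl a, Sum.inl b => G.Adj a b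
    | Sum.inr a, Sum.inr b => H.Adj a b
    | Sum.inl _, Sum.inr _ => True
    | Sum.inr _, Sum.inl _ => True
  symm := by refine ⟨?_⟩; rintro (a|a) (b|b) h <;> first | exact h.symm | trivial
  loopless := by
    refine ⟨?_⟩
    rintro (a|a) h
    · exact G.loopless.irrefl a h
    · exact H.loopless.irrefl a h

open scoped Classical in
/-- The adjacency spectral radius of a finite graph. -/
noncomputable def specRad {V : Type*} [Fintype V] [DecidableEq V]
    (G : SimpleGraph V) : ℝ :=
  sSup (spectrum ℝ (G.adjMatrix ℝ))

/-- The disjoint union of paths with orders given by the list `L`. -/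
def pathsUnion (L : List ℕ) : SimpleGraph (Σ i : Fin L.length, Fin (L.get i)) where
  Adj x y := x.1 = y.1 ∧ (x.2.val + 1 = y.2.val ∨ y.2.val + 1 = x.2.val)
  symm := by refine ⟨?_⟩; rintro ⟨i, a⟩ ⟨j, b⟩ ⟨h1, h2⟩; exact ⟨h1.symm, h2.symm⟩
  loopless := by refine ⟨?_⟩; rintro ⟨i, a⟩ ⟨-, h⟩; rcases h with h | h <;> omega

/-- `B_{tl}`: `t` edge-disjoint `l`-cycles sharing exactly one common vertex (`none`). -/
def bouquet (t l : ℕ) : SimpleGraph (Option (Fin t × Fin (l - 1))) where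
  Adj x y :=
    match x, y with
    | none, none => False
    | none, some p => p.2.val = 0 ∨ p.2.val = l - 2
    | some p, none => p.2.val = 0 ∨ p.2.val = l - 2
    | some p, some q => p.1 = q.1 ∧ (p.2.val + 1 = q.2.val ∨ q.2.val + 1 = p.2.val)
  symm := by
    refine ⟨?_⟩
    rintro (_|p) (_|q) h
    · exact h
    · exact h
    · exact h
    · exact ⟨h.1.symm, h.2.symm⟩
  loopless := by
    refine ⟨?_⟩
    rintro (_|p) h
    · exact h
    · rcases h.2 with h' | h' <;> omega

/-- `F` occurs as a subgraph of `G`. -/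
def ContainsSubgraph {α β : Type*} (F : SimpleGraph α) (G : SimpleGraph β) : Prop :=
  ∃ f : F →g G, Function.Injective f

/-- `G` has a matching of size `k`. -/
def HasMatching {V : Type*} (G : SimpleGraph V) (k : ℕ) : Prop :=
  ∃ M : Finset (Sym2 V), M.card = k ∧ ↑M ⊆ G.edgeSet ∧
    (M : Set (Sym2 V)).Pairwise fun e f => ∀ v, v ∈ e → v ∉ f

/-- A linear forest: a disjoint union of (possibly trivial) paths. -/
def IsLinearForest {V : Type*} (H : SimpleGraph V) : Prop :=
  H.IsAcyclic ∧ ∀ v, (H.neighborSet v).ncard ≤ 2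

/-- `G` contains a cycle of length `l`. -/
def HasCycleLength {V : Type*} (G : SimpleGraph V) (l : ℕ) : Prop :=
  ∃ (u : V) (w : G.Walk u u), w.IsCycle ∧ w.length = l

/-!
Cut the longest path into `t - 1` consecutive segments of `ℓ - 1` vertices and take `ℓ - 1`
vertices of a second path as the last segment. Joining both ends of each segment to the cone
vertex of `K₁ ∨ H` closes it into an `ℓ`-cycle, and these cycles meet only in the cone vertex.
-/

variable {α β : Type*}

theorem containsSubgraph_bouquet_graphJoin {t l : ℕ} (G : SimpleGraph α) (H : SimpleGraph β)
    (a : α) (g : Fin t × Fin (l - 1) → β) (hg : Function.Injective g)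
    (hadj : ∀ i (j j' : Fin (l - 1)), j.val + 1 = j'.val → H.Adj (g (i, j)) (g (i, j'))) :
    ContainsSubgraph (bouquet t l) (graphJoin G H) := by
  refine ⟨⟨fun x => x.elim (Sum.inl a) (Sum.inr ∘ g), ?_⟩, ?_⟩
  · rintro (_ | ⟨i, j⟩) (_ | ⟨i', j'⟩) h
    · exact h.elim
    · trivial
    · trivial
    · obtain ⟨rfl, h | h⟩ := h
      · exact hadj i j j' h
      · exact (hadj i j' j h).symm
  · rintro (_ | x) (_ | y) h
    · rfl
    · cases h
    · cases h
    · exact congrArg some (hg (Sum.inr_injective h))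

theorem containsSubgraph_bouquet_graphJoin_pathsUnion {t l : ℕ} (G : SimpleGraph α) (a : α)
    {L : List ℕ} {p q : Fin L.length} (hpq : p ≠ q)
    (hp : (t - 1) * (l - 1) ≤ L.get p) (hq : l - 1 ≤ L.get q) :
    ContainsSubgraph (bouquet t l) (graphJoin G (pathsUnion L)) := by
  let g : Fin t × Fin (l - 1) → Σ i : Fin L.length, Fin (L.get i) := fun ⟨i, j⟩ =>
    if hi : i.val < t - 1 then ⟨p, Fin.castLE hp (finProdFinEquiv (⟨i, hi⟩, j))⟩
    else ⟨q, Fin.castLE hq j⟩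
  refine containsSubgraph_bouquet_graphJoin G _ a g ?_ ?_
  · rintro ⟨i, j⟩ ⟨i', j'⟩ h
    by_cases hi : i.val < t - 1 <;> by_cases hi' : i'.val < t - 1 <;>
      simp only [g, hi, hi', dite_true, dite_false, Sigma.mk.inj_iff, heq_iff_eq, true_and] at h
    · obtain ⟨hii, rfl⟩ := Prod.mk.inj (finProdFinEquiv.injective (Fin.castLE_injective _ h))
      obtain rfl : i = i' := Fin.ext (Fin.mk.inj_iff.mp hii)
      rfl
    · exact absurd h.1 hpq
    · exact absurd h.1 hpq.symm
    · obtain rfl := Fin.castLE_injective _ h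
      obtain rfl : i = i' := Fin.ext (by omega)
      rfl
  · intro i j j' h
    by_cases hi : i.val < t - 1
    · simp only [g, hi, dite_true]
      exact ⟨rfl, Or.inl (by simp only [Fin.val_castLE, finProdFinEquiv_apply_val]; omega)⟩
    · simp only [g, hi, dite_false]
      exact ⟨rfl, Or.inl h⟩

theorem btl_free_second_path_general (t l : ℕ) (hl : 3 ≤ l) (n₁ : ℕ) (rest : List ℕ)
    (hn₁ : n₁ = (t - 1) * (l - 1) + l - 2)
    (hfree : ¬ ContainsSubgraph (bouquet t l)
      (graphJoin (⊥ : SimpleGraph Unit) (pathsUnion (n₁ :: rest)))) :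
    ∀ m ∈ rest, m ≤ l - 2 := by
  intro m hm
  by_contra! hlt
  obtain ⟨k, rfl⟩ := List.get_of_mem hm
  exact hfree <| containsSubgraph_bouquet_graphJoin_pathsUnion ⊥ ()
    (p := ⟨0, by simp⟩) (q := ⟨k + 1, by simp⟩) (by simp) (by simp [hn₁]; omega)
    (show l - 1 ≤ rest.get k by omega)

theorem btl_free_second_path (t l : ℕ) (ht : 1 ≤ t) (hl : 3 ≤ l) (n₁ : ℕ) (rest : List ℕ)
    (hsorted : (n₁ :: rest).Pairwise (· ≥ ·)) (hpos : ∀ m ∈ n₁ :: rest, 1 ≤ m)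
    (hn₁ : n₁ = (t - 1) * (l - 1) + l - 2)
    (hfree : ¬ ContainsSubgraph (bouquet t l)
      (graphJoin (⊥ : SimpleGraph Unit) (pathsUnion (n₁ :: rest)))) :
    ∀ m ∈ rest, m ≤ l - 2 :=
  btl_free_second_path_general t l hl n₁ rest hn₁ hfree
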